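/- Let n ≥ 3, let d = 2n and let s₂ = (2, n−3) ∈ ℤ². Then for every i ∈ ℤ/2nℤ, the Kashiwara operator ẽ_i (defined with respect to d and the charge s₂) annihilates the bipartition ∅.2^{n−3}: ẽ_i(∅.2^{n−3}) = 0. -/

import Mathlib

open scoped Classical

noncomputable section

/-- A partition: an antitone, eventually zero sequence of natural numbers.
`parts k` is the `(k+1)`-st part `λ_{k+1}`. -/
structure PartitionSeq where
  parts : ℕ → ℕ
  antitone' : Antitone parts
  exists_zero : ∃ N, parts N = 0

namespace PartitionSeq

lemma sorted_getD_antitone {l : List ℕ} (h : l.Pairwise (· ≥ ·)) :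
    Antitone (fun k => l.getD k 0) := by
  intro i j hij
  simp only
  rcases lt_or_ge j l.length with hj | hj
  · have hi : i < l.length := lt_of_le_of_lt hij hj
    rw [List.getD_eq_getElem l 0 hj, List.getD_eq_getElem l 0 hi]
    rcases eq_or_lt_of_le hij with rfl | hlt
    · exact le_rfl
    · exact List.pairwise_iff_getElem.mp h i j hi hj hlt
  · rw [List.getD_eq_default l 0 hj]
    exact Nat.zero_le _

/-- The partition whose multiset of (nonzero) parts is the multiset of nonzero
elements of `m`. -/
def ofMul (m : Multiset ℕ) : PartitionSeq where
  parts := fun k => ((m.sort (· ≤ ·)).reverse).getD k 0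
  antitone' := by
    apply sorted_getD_antitone
    rw [List.pairwise_reverse]
    exact Multiset.pairwise_sort (r := (· ≤ ·)) (s := m)
  exists_zero := ⟨((m.sort (· ≤ ·)).reverse).length, List.getD_eq_default _ _ le_rfl⟩

/-- The size `|λ|` of a partition: the sum of its parts. -/
def size (p : PartitionSeq) : ℕ := ∑ i ∈ Finset.range (Nat.find p.exists_zero), p.parts i

lemma finite_gt (p : PartitionSeq) (k : ℕ) : {i : ℕ | k < p.parts i}.Finite := by
  obtain ⟨N, hN⟩ := p.exists_zero
  apply (Set.finite_Iio N).subset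
  intro i hi
  simp only [Set.mem_setOf_eq] at hi
  by_contra hc
  simp only [Set.mem_Iio, not_lt] at hc
  have := p.antitone' hc
  omega

/-- The conjugate (transpose) partition. -/
def conj (p : PartitionSeq) : PartitionSeq where
  parts := fun k => {i : ℕ | k < p.parts i}.ncard
  antitone' := fun a b hab =>
    Set.ncard_le_ncard (fun i hi => lt_of_le_of_lt hab hi) (p.finite_gt a)
  exists_zero := by
    refine ⟨p.parts 0, ?_⟩
    have h : {i : ℕ | p.parts 0 < p.parts i} = ∅ := by
      ext i
      simp only [Set.mem_setOf_eq, Set.mem_empty_iff_false, iff_false, not_lt]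
      exact p.antitone' (Nat.zero_le i)
    show {i : ℕ | p.parts 0 < p.parts i}.ncard = 0
    rw [h, Set.ncard_empty]

/-- The 180°-rotation of the complement of `p` inside the rectangle with
`rows` rows of length `c`: the partition `(c - p_rows, c - p_{rows-1}, …, c - p₁)`. -/
def rotCompl (c rows : ℕ) (p : PartitionSeq) : PartitionSeq where
  parts := fun k => if k < rows then c - p.parts (rows - 1 - k) else 0
  antitone' := by
    intro a b hab
    by_cases hb : b < rows
    · have ha : a < rows := lt_of_le_of_lt hab hb
      simp only [if_pos hb, if_pos ha]
      exact Nat.sub_le_sub_left (p.antitone' (by omega)) c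
    · simp only [if_neg hb]
      exact Nat.zero_le _
  exists_zero := ⟨rows, by simp⟩

end PartitionSeq

/-- A bipartition: a pair of partitions. -/
abbrev Bipartition := PartitionSeq × PartitionSeq

/-- The size of a bipartition. -/
def Bipartition.size (l : Bipartition) : ℕ := l.1.size + l.2.size

/-- The bipartition whose components have parts the multisets `a` and `b`. -/
def bip (a b : Multiset ℕ) : Bipartition := (PartitionSeq.ofMul a, PartitionSeq.ofMul b)

/-- The multiset of parts of the partition `a 1^b` (one part `a`, then `b` parts `1`). -/
def hook (a b : ℕ) : Multiset ℕ := a ::ₘ Multiset.replicate b 1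

/-- The charged β-set of a partition, as a sequence:
`betaSet p s i = λ_{i+1} + s - (i+1) + 1`. -/
def betaSet (p : PartitionSeq) (s : ℤ) (i : ℕ) : ℤ := (p.parts i : ℤ) + s - i

/-- The charged symbol of a bipartition with charge `σ`, as a pair of subsets of `ℤ`. -/
def symbolOf (l : Bipartition) (σ : ℤ × ℤ) : Set ℤ × Set ℤ :=
  (Set.range (betaSet l.1 σ.1), Set.range (betaSet l.2 σ.2))

/-- The charge `σ_t`. -/
def sigmaT (t : ℕ) : ℤ × ℤ :=
  if Even t then ((t : ℤ), -1 - (t : ℤ)) else (-1 - (t : ℤ), (t : ℤ))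

/-- The trivial symbol `({0,-1,-2,…},{-1,-2,-3,…})`, the symbol of the empty
bipartition with charge `σ₀ = (0,-1)`. -/
def trivialSymbol : Set ℤ × Set ℤ := ({z : ℤ | z ≤ 0}, {z : ℤ | z ≤ -1})

/-- Removing one `n`-co-hook from the symbol `Λ`, yielding `Λ'`: remove `x+n` from one
row, adjoin `x` to the other row, and exchange the two rows. -/
def CohookStep (n : ℕ) (Λ Λ' : Set ℤ × Set ℤ) : Prop :=
  (∃ x : ℤ, x + n ∈ Λ.1 ∧ x ∉ Λ.2 ∧ Λ' = (Λ.2 ∪ {x}, Λ.1 \ {x + n})) ∨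
  (∃ x : ℤ, x + n ∈ Λ.2 ∧ x ∉ Λ.1 ∧ Λ' = (Λ.2 \ {x + n}, Λ.1 ∪ {x}))

/-- `C` is the `n`-co-core of `Λ`: it is obtained from `Λ` by recursively removing
`n`-co-hooks, and no further `n`-co-hook can be removed. -/
def IsCocore (n : ℕ) (Λ C : Set ℤ × Set ℤ) : Prop :=
  Relation.ReflTransGen (CohookStep n) Λ C ∧ ∀ C', ¬ CohookStep n C C'

/-- Number of entries of the charged β-set of `p` that are `≥ α` (with multiplicity). -/
def betaCountGE (p : PartitionSeq) (s α : ℤ) : ℕ := Nat.card {i : ℕ // α ≤ betaSet p s i}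

/-- Number of entries `≥ α`, with multiplicity, of the multiset union of the two rows
of the symbol of `l` with charge `σ`. -/
def symCountGE (l : Bipartition) (σ : ℤ × ℤ) (α : ℤ) : ℕ :=
  betaCountGE l.1 σ.1 α + betaCountGE l.2 σ.2 α

/-- The composition `ϖ_Λ` of the symbol of `l` with charge `σ`: `comp l σ k` is the
`(k+1)`-st largest entry (with multiplicity) of the multiset union of the two rows. -/
def comp (l : Bipartition) (σ : ℤ × ℤ) (k : ℕ) : ℤ :=
  sSup {z : ℤ | k + 1 ≤ symCountGE l σ z}

/-- All partial sums of the composition of the symbol `(l,σ)` are bounded by those of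
`(m,τ)`. -/
def DomLE (l : Bipartition) (σ : ℤ × ℤ) (m : Bipartition) (τ : ℤ × ℤ) : Prop :=
  ∀ j : ℕ, ∑ k ∈ Finset.range j, comp l σ k ≤ ∑ k ∈ Finset.range j, comp m τ k

/-- Strict dominance `Λ ⊲ Λ'` of symbols: the compositions differ and all partial sums
of the first are bounded by those of the second. -/
def DomLT (l : Bipartition) (σ : ℤ × ℤ) (m : Bipartition) (τ : ℤ × ℤ) : Prop :=
  comp l σ ≠ comp m τ ∧ DomLE l σ m τ

/-- A box `(x, y, j)` (0-indexed row `x`, 0-indexed column `y`, component `j`: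
`j = 0` is the first component, `j = 1` the second). -/
abbrev Box := ℕ × ℕ × Fin 2

/-- The component of a bipartition selected by `j : Fin 2`. -/
def Bipartition.partsOf (l : Bipartition) (j : Fin 2) : PartitionSeq := if j = 0 then l.1 else l.2

/-- Membership of a box in the Young diagram of a bipartition. -/
def MemY (l : Bipartition) (b : Box) : Prop := b.2.1 < (l.partsOf b.2.2).parts b.1

/-- The entry of the charge `σ` corresponding to component `j`. -/
def chargeOf (σ : ℤ × ℤ) (j : Fin 2) : ℤ := if j = 0 then σ.1 else σ.2

/-- The charged content `co^σ(b) = y - x + σ_j` of a box. -/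
def content (σ : ℤ × ℤ) (b : Box) : ℤ := (b.2.1 : ℤ) - (b.1 : ℤ) + chargeOf σ b.2.2

/-- `j(b) ∈ {1,2}`: the component of a box, numbered 1 or 2. -/
def jval (b : Box) : ℕ := (b.2.2 : ℕ) + 1

/-- The counting function of the Dunkl–Griffeth order. -/
def dgCount (l : Bipartition) (s : ℤ × ℤ) (d : ℕ) (α : ℝ) (j : ℕ) : ℕ :=
  Nat.card {b : Box // MemY l b ∧
    (α < (content s b : ℝ) - (jval b : ℝ) * (d : ℝ) / 2 ∨
      ((content s b : ℝ) - (jval b : ℝ) * (d : ℝ) / 2 = α ∧ jval b ≤ j))}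

/-- The Dunkl–Griffeth order `λ ⪯_s μ` (with respect to `d`). -/
def DGLE (l m : Bipartition) (s : ℤ × ℤ) (d : ℕ) : Prop :=
  ∀ (α : ℝ), ∀ j ∈ ({1, 2} : Set ℕ), dgCount l s d α j ≤ dgCount m s d α j

/-- A box of the extended Young diagram: rows are infinite to the left, so the column
coordinate is an integer.  `(x, y, j)` is the box in (0-indexed) row `x`, with integer
column coordinate `y` (`y = 0` is the first column), in component `j`. -/
abbrev ExtBox := ℕ × ℤ × Fin 2

/-- Membership in the extended Young diagram of a bipartition. -/
def MemExtY (l : Bipartition) (b : ExtBox) : Prop :=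
  b.2.1 < ((l.partsOf b.2.2).parts b.1 : ℤ)

/-- The charged content of an extended box. -/
def contentExt (σ : ℤ × ℤ) (b : ExtBox) : ℤ := b.2.1 - (b.1 : ℤ) + chargeOf σ b.2.2

/-- `b` is a removable box of the bipartition `l`. -/
def Removable (l : Bipartition) (b : Box) : Prop :=
  (l.partsOf b.2.2).parts b.1 = b.2.1 + 1 ∧ (l.partsOf b.2.2).parts (b.1 + 1) ≤ b.2.1

/-- `b` is an addable box of the bipartition `l`. -/
def Addable (l : Bipartition) (b : Box) : Prop :=
  (l.partsOf b.2.2).parts b.1 = b.2.1 ∧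
    (b.1 = 0 ∨ b.2.1 + 1 ≤ (l.partsOf b.2.2).parts (b.1 - 1))

/-- The order in which boxes are listed in the `i`-word: increasing charged content,
a component-2 box preceding a component-1 box of equal charged content. -/
def BoxLT (σ : ℤ × ℤ) (b b' : Box) : Prop :=
  content σ b < content σ b' ∨
    (content σ b = content σ b' ∧ b.2.2 = 1 ∧ b'.2.2 = 0)

/-- `L` is the list of boxes underlying the `i`-word of `(l, σ)` with respect to `d`:
it lists, in increasing order, exactly the addable and removable boxes of `l` whose
charged content is congruent to `i` modulo `d`. -/
def IsIWord (l : Bipartition) (σ : ℤ × ℤ) (d : ℕ) (i : ZMod d) (L : List Box) : Prop :=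
  L.Pairwise (BoxLT σ) ∧
    ∀ b : Box, b ∈ L ↔ ((Addable l b ∨ Removable l b) ∧ ((content σ b : ZMod d) = i))

/-- The sign of a box in the `i`-word: `true` (`+`) for addable, `false` (`−`) for
removable boxes. -/
def signOf (l : Bipartition) (b : Box) : Bool := if Addable l b then true else false

/-- One reduction step on words: delete an adjacent pair `−+`. -/
def RedStep (w w' : List Bool) : Prop :=
  ∃ u v : List Bool, w = u ++ false :: true :: v ∧ w' = u ++ v

/-- `ẽ_i l = 0`: the reduced `i`-word of `(l, σ)` contains no `−`, i.e. the `i`-word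
reduces to a word consisting only of `+`'s. -/
def AnnihilatedE (l : Bipartition) (σ : ℤ × ℤ) (d : ℕ) (i : ZMod d) : Prop :=
  ∃ L : List Box, IsIWord l σ d i L ∧
    ∃ a : ℕ, Relation.ReflTransGen RedStep (L.map (signOf l)) (List.replicate a true)

/-- `q` is obtained from the partition `p` by adding one box. -/
def PCovers (p q : PartitionSeq) : Prop :=
  ∃ x : ℕ, q.parts x = p.parts x + 1 ∧ ∀ y : ℕ, y ≠ x → q.parts y = p.parts y

/-- `m` is obtained from the bipartition `l` by adding one box to its Young diagram. -/
def BipCovers (l m : Bipartition) : Prop :=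
  (PCovers l.1 m.1 ∧ m.2 = l.2) ∨ (m.1 = l.1 ∧ PCovers l.2 m.2)

/-- `A(l) = Σ_μ μ`, the sum over all bipartitions obtained from `l` by adding one box,
as an element of the group of `ℤ`-valued functions on bipartitions. -/
def addB (l : Bipartition) : Bipartition → ℤ := fun m => if BipCovers l m then 1 else 0

/-- The projection `π_S` onto the span of the bipartitions lying in `S`. -/
def projS (S : Set Bipartition) (f : Bipartition → ℤ) : Bipartition → ℤ :=
  fun m => if m ∈ S then f m else 0

/-- The basis element of `ℤ[BP]` corresponding to a bipartition. -/
def deltaB (l : Bipartition) : Bipartition → ℤ := fun m => if m = l then 1 else 0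

/-- The bipartitions of `2n` labelling the principal-series unipotent characters in
the principal `Φ_{2n}`-block. -/
def PS (n : ℕ) : Set Bipartition :=
  {l | (∃ i j : ℕ, 0 < i ∧ i < n ∧ j ≤ n ∧
          l = bip (hook (n - i) j) (hook (n - j + 1) (i - 1))) ∨
       (∃ j : ℕ, j < 2 * n ∧ l = bip (hook (2 * n - j) j) 0) ∨
       (∃ i : ℕ, 0 < i ∧ i ≤ 2 * n ∧ l = bip 0 (hook (2 * n - i + 1) (i - 1)))}

/-- The bipartitions of `2n-2` labelling the `B₂`-series unipotent characters in the
principal `Φ_{2n}`-block: `2^i 1^{j-i-1} . (n-i-1)(n-j)` for `0 ≤ i < j ≤ n`. -/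
def LB2 (n : ℕ) : Set Bipartition :=
  {l | ∃ i j : ℕ, i < j ∧ j ≤ n ∧
        l = bip (Multiset.replicate i 2 + Multiset.replicate (j - i - 1) 1)
                {n - i - 1, n - j}}

/-- The bipartitions of `2n-6` labelling the `B₆`-series unipotent characters in the
principal `Φ_{2n}`-block: `(n-i-2)(n-j-1) . 2^{i-1} 1^{j-i-1}` for `0 < i < j < n`. -/
def LB6 (n : ℕ) : Set Bipartition :=
  {l | ∃ i j : ℕ, 0 < i ∧ i < j ∧ j < n ∧
        l = bip {n - i - 2, n - j - 1}
                (Multiset.replicate (i - 1) 2 + Multiset.replicate (j - i - 1) 1)}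

end

/-! The addable boxes of `∅.2^m` are `(0,0)` in the first component and `(m,0)`, `(0,2)` in the
second; its only removable box is `(m-1,1)` in the second component. When `s₂ = s₁ + m - 2` this
removable box has the same charged content as the addable box `(0,0)` of the first component, so
it is listed immediately before it in every `i`-word, whatever `d` is. Hence every `−` of an
`i`-word is cancelled by the `+` right after it, and the word reduces to `+`'s. -/

def ReducesToPlus (w : List Bool) : Prop :=
  ∃ a : ℕ, Relation.ReflTransGen RedStep w (List.replicate a true)

lemma RedStep.append_left {w w' : List Bool} (h : RedStep w w') (x : List Bool) :
    RedStep (x ++ w) (x ++ w') := by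
  obtain ⟨u, v, rfl, rfl⟩ := h
  exact ⟨x ++ u, v, by simp, by simp⟩

lemma RedStep.append_right {w w' : List Bool} (h : RedStep w w') (y : List Bool) :
    RedStep (w ++ y) (w' ++ y) := by
  obtain ⟨u, v, rfl, rfl⟩ := h
  exact ⟨u, v ++ y, by simp, by simp⟩

lemma ReducesToPlus.append {w₁ w₂ : List Bool} (h₁ : ReducesToPlus w₁) (h₂ : ReducesToPlus w₂) :
    ReducesToPlus (w₁ ++ w₂) := by
  obtain ⟨a, ha⟩ := h₁
  obtain ⟨b, hb⟩ := h₂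
  refine ⟨a + b, ?_⟩
  rw [List.replicate_add]
  exact (ha.lift (· ++ w₂) fun _ _ h => h.append_right w₂).trans
    (hb.lift (List.replicate a true ++ ·) fun _ _ h => h.append_left _)

lemma reducesToPlus_of_forall_eq_true {w : List Bool} (h : ∀ x ∈ w, x = true) :
    ReducesToPlus w :=
  ⟨w.length, by rw [← List.eq_replicate_iff.mpr ⟨rfl, h⟩]⟩

lemma reducesToPlus_false_true : ReducesToPlus [false, true] :=
  ⟨0, .single ⟨[], [], rfl, rfl⟩⟩

lemma signOf_of_addable {l : Bipartition} {b : Box} (h : Addable l b) : signOf l b = true :=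
  if_pos h

lemma signOf_of_removable {l : Bipartition} {b : Box} (h : Removable l b) :
    signOf l b = false :=
  if_neg fun ha => by have := ha.1.symm.trans h.1; omega

lemma reducesToPlus_signOf_of_forall_addable {l : Bipartition} {L : List Box}
    (h : ∀ b ∈ L, Addable l b) : ReducesToPlus (L.map (signOf l)) :=
  reducesToPlus_of_forall_eq_true <| by simpa [signOf] using h

lemma isIWord_filter {l : Bipartition} {σ : ℤ × ℤ} {L : List Box} (hL : L.Pairwise (BoxLT σ))
    (hmem : ∀ b, b ∈ L ↔ Addable l b ∨ Removable l b) (d : ℕ) (i : ZMod d) :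
    IsIWord l σ d i (L.filter fun b => (content σ b : ZMod d) = i) :=
  ⟨hL.filter _, fun b => by simp [hmem]⟩

lemma reducesToPlus_filter_removable_addable {l : Bipartition} {σ : ℤ × ℤ} {d : ℕ} {i : ZMod d}
    {r a : Box} (hr : Removable l r) (ha : Addable l a) (hc : content σ r = content σ a) :
    ReducesToPlus (([r, a].filter fun b => (content σ b : ZMod d) = i).map (signOf l)) := by
  by_cases h : (content σ a : ZMod d) = i
  · simpa [hc, h, signOf_of_removable hr, signOf_of_addable ha] using reducesToPlus_false_true
  · simpa [hc, h] using reducesToPlus_of_forall_eq_true (w := []) (by simp)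

lemma content_mk_zero (σ : ℤ × ℤ) (x y : ℕ) : content σ (x, y, 0) = y - x + σ.1 := rfl

lemma content_mk_one (σ : ℤ × ℤ) (x y : ℕ) : content σ (x, y, 1) = y - x + σ.2 := rfl

def emptyTwos (m : ℕ) : Bipartition := bip 0 (Multiset.replicate m 2)

lemma emptyTwos_parts_zero (m x : ℕ) : ((emptyTwos m).partsOf 0).parts x = 0 := by
  simp [emptyTwos, bip, Bipartition.partsOf, PartitionSeq.ofMul]

lemma emptyTwos_parts_one (m x : ℕ) :
    ((emptyTwos m).partsOf 1).parts x = if x < m then 2 else 0 := by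
  have hsort : (Multiset.replicate m 2).sort (· ≤ ·) = List.replicate m 2 := by
    rw [← List.perm_replicate, ← Multiset.coe_eq_coe, Multiset.sort_eq, Multiset.coe_replicate]
  change (((Multiset.replicate m 2).sort (· ≤ ·)).reverse).getD x 0 = _
  rw [hsort, List.reverse_replicate, List.getD_eq_getElem?_getD, List.getElem?_replicate]
  split_ifs <;> rfl

lemma addable_emptyTwos_iff (m : ℕ) (b : Box) :
    Addable (emptyTwos m) b ↔
      b = (0, 0, 0) ∨ b = (m, 0, 1) ∨ (0 < m ∧ b = (0, 2, 1)) := by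
  obtain ⟨x, y, j⟩ := b
  fin_cases j
  · simp only [Fin.zero_eta, Addable, emptyTwos_parts_zero, Prod.mk.injEq, zero_ne_one,
      and_false, or_false, and_true]
    omega
  · simp only [Fin.mk_one, Addable, emptyTwos_parts_one, Prod.mk.injEq, Fin.one_eq_zero_iff,
      and_true]
    split <;> split <;> omega

lemma removable_emptyTwos_iff (m : ℕ) (b : Box) :
    Removable (emptyTwos m) b ↔ 0 < m ∧ b = (m - 1, 1, 1) := by
  obtain ⟨x, y, j⟩ := b
  fin_cases j
  · simp [Removable, emptyTwos_parts_zero]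
  · simp only [Fin.mk_one, Removable, emptyTwos_parts_one, Prod.mk.injEq, and_true]
    split <;> split <;> omega

def emptyTwosBoxes : ℕ → List Box
  | 0 => [(0, 0, 1), (0, 0, 0)]
  | k + 1 => [(k + 1, 0, 1), (k, 1, 1), (0, 0, 0), (0, 2, 1)]

lemma mem_emptyTwosBoxes_iff (m : ℕ) (b : Box) :
    b ∈ emptyTwosBoxes m ↔ Addable (emptyTwos m) b ∨ Removable (emptyTwos m) b := by
  rw [addable_emptyTwos_iff, removable_emptyTwos_iff]
  cases m <;> simp [emptyTwosBoxes] <;> tauto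

lemma emptyTwosBoxes_pairwise_boxLT (m : ℕ) {s : ℤ × ℤ} (hs : s.2 = s.1 + m - 2) :
    (emptyTwosBoxes m).Pairwise (BoxLT s) := by
  cases m <;> simp [emptyTwosBoxes, BoxLT, content_mk_zero, content_mk_one] <;> omega

lemma reducesToPlus_emptyTwos_word (m : ℕ) {s : ℤ × ℤ} (hs : s.2 = s.1 + m - 2) (d : ℕ)
    (i : ZMod d) : ReducesToPlus (((emptyTwosBoxes m).filter
      fun b => (content s b : ZMod d) = i).map (signOf (emptyTwos m))) := by
  have haddable (b : Box) (hb : b = (0, 0, 0) ∨ b = (m, 0, 1) ∨ (0 < m ∧ b = (0, 2, 1))) :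
      Addable (emptyTwos m) b := (addable_emptyTwos_iff m b).2 hb
  cases m with
  | zero =>
    refine reducesToPlus_signOf_of_forall_addable fun b hb => haddable b ?_
    rcases List.mem_pair.1 (List.mem_of_mem_filter hb) with rfl | rfl <;> simp
  | succ k =>
    have hc : content s (k, 1, 1) = content s (0, 0, 0) := by
      rw [content_mk_one, content_mk_zero]
      omega
    -- group the boxes by charged content: the residue filter keeps or drops each group whole
    change ReducesToPlus ((List.filter _
      ([(k + 1, 0, 1)] ++ [(k, 1, 1), (0, 0, 0)] ++ [(0, 2, 1)] : List Box)).map _)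
    rw [List.filter_append, List.filter_append, List.map_append, List.map_append]
    refine .append (.append ?_ ?_) ?_
    · exact reducesToPlus_signOf_of_forall_addable fun b hb =>
        haddable b (.inr (.inl (List.mem_singleton.1 (List.mem_of_mem_filter hb))))
    · exact reducesToPlus_filter_removable_addable
        ((removable_emptyTwos_iff _ _).2 ⟨k.succ_pos, rfl⟩) (haddable _ (.inl rfl)) hc
    · exact reducesToPlus_signOf_of_forall_addable fun b hb =>
        haddable b (.inr (.inr ⟨k.succ_pos, List.mem_singleton.1 (List.mem_of_mem_filter hb)⟩))

lemma annihilatedE_emptyTwos (m : ℕ) {s : ℤ × ℤ} (hs : s.2 = s.1 + m - 2) (d : ℕ) (i : ZMod d) :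
    AnnihilatedE (emptyTwos m) s d i :=
  ⟨_, isIWord_filter (emptyTwosBoxes_pairwise_boxLT m hs) (mem_emptyTwosBoxes_iff m) d i,
    reducesToPlus_emptyTwos_word m hs d i⟩

/-- With `d = 2n` and charge `s₂ = (2, n-3)`, every Kashiwara
operator `ẽ_i` annihilates the bipartition `∅.2^{n-3}`. -/
theorem decomposition_numbers_stmt11 (n : ℕ) (hn : 3 ≤ n) (i : ZMod (2 * n)) :
    AnnihilatedE (bip 0 (Multiset.replicate (n - 3) 2)) (2, (n : ℤ) - 3) (2 * n) i :=
  annihilatedE_emptyTwos (n - 3) (by push_cast [hn]; ring) (2 * n) i
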